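/- With $\chi_t(z) = \omega(t)^{-1} f_t(z)$ as above, for all $z \in \mathbb{C}_\infty$ with $|z| < q$, one has $\|\chi_t(z)\| = |z|$ (Gauss norm on $\mathbb{T}$). In particular, $\chi_t$ restricts to an injective $\mathbb{F}_q$-linear map from $\{z \in \mathbb{C}_\infty : |z| < q\}$ to $\{f \in \mathbb{T} : \|f\| < q\}$. -/

import Mathlib

noncomputable section

open Polynomial Filter PowerSeries

/-- `d_i = ∏_{j=0}^{i-1} (θ^{q^i} - θ^{q^j})`, with `d_0 = 1`. -/
def carlitzD (Cinf : Type*) [Field Cinf] (θ : Cinf) (q i : ℕ) : Cinf :=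
  ∏ j ∈ Finset.range i, (θ ^ q ^ i - θ ^ q ^ j)

/-- The Carlitz exponential `exp_C(z) = ∑_{i ≥ 0} d_i⁻¹ z^{q^i}`. -/
def expC (Cinf : Type*) [NormedField Cinf] (θ : Cinf) (q : ℕ) (z : Cinf) : Cinf :=
  ∑' i : ℕ, (carlitzD Cinf θ q i)⁻¹ * z ^ q ^ i

/-- `e_C(z) = exp_C(π̃ z)`. -/
def eC (Cinf : Type*) [NormedField Cinf] (θ π : Cinf) (q : ℕ) (z : Cinf) : Cinf :=
  expC Cinf θ q (π * z)

/-- The `N`-th partial sum of the Anderson generating function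
`f_t(z) = ∑_{n ≥ 0} (π̃ z)^{q^n} / ((θ^{q^n} - t) d_n)`, as a power series in `t`. -/
def ftPartial (Cinf : Type*) [NormedField Cinf] (θ π : Cinf) (q : ℕ) (z : Cinf) (N : ℕ) :
    PowerSeries Cinf :=
  ∑ n ∈ Finset.range N,
    PowerSeries.C ((π * z) ^ q ^ n * (carlitzD Cinf θ q n)⁻¹) *
      (PowerSeries.C (θ ^ q ^ n) - PowerSeries.X)⁻¹

/-- The Gauss norm `‖∑ c_m t^m‖ = sup_m |c_m|` on `ℂ∞[[t]]` (finite on the Tate algebra). -/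
def gaussNorm (Cinf : Type*) [NormedField Cinf] (f : PowerSeries Cinf) : ℝ :=
  ⨆ m : ℕ, ‖PowerSeries.coeff m f‖

/-!
In the coefficient of `t^m` in `f_t(z)`, the `n`-th summand
`c_n = (π̃ z)^{q^n} / (d_n θ^{q^n (m+1)})` has `|c_n| = |c_0|^{q^n} / q^{n q^n}`, since
`|d_n| = q^{n q^n}`. As `|π̃|^{q^n - 1} ≤ q^{n q^n}` and `|z| < q`, each `c_n` with `n ≥ 1` is
smaller than `c_0` by the factor `|z| / q`, so ultrametrically
`|coeff_m f_t(z)| = |c_0| = |π̃ z| / q^{m+1}`. All coefficients of `ω = λ ∏ (1 - t/θ^{q^i})⁻¹` are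
bounded by its constant coefficient `λ`, hence those of `ω⁻¹` by `|λ|⁻¹`; with `|π̃| = q |λ|`, the
coefficients of `χ_t(z)` are bounded by `|z|`, and the constant one attains it. Injectivity holds
because `f_t` is additive, `q` being a power of the characteristic.
-/

open Topology

section Ultrametric

variable {E : Type*} [NormedAddCommGroup E] [IsUltrametricDist E]

lemma IsUltrametricDist.norm_add_eq_left_of_norm_le_mul {a b : E} {r : ℝ} (hr : r < 1)
    (hb : ‖b‖ ≤ r * ‖a‖) : ‖a + b‖ = ‖a‖ := by
  rcases eq_or_ne a 0 with rfl | ha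
  · simp_all [norm_le_zero_iff.mp (by simpa using hb)]
  · have hlt : ‖b‖ < ‖a‖ := hb.trans_lt (by nlinarith [norm_pos_iff.mpr ha])
    rw [norm_add_eq_max_of_norm_ne_norm hlt.ne', max_eq_left hlt.le]

lemma IsUltrametricDist.norm_eq_of_tendsto_sum_range {t : ℕ → E} {s : E} {r : ℝ}
    (hr₀ : 0 ≤ r) (hr : r < 1) (ht : ∀ n, 1 ≤ n → ‖t n‖ ≤ r * ‖t 0‖)
    (hs : Tendsto (fun N ↦ ∑ n ∈ Finset.range N, t n) atTop (𝓝 s)) : ‖s‖ = ‖t 0‖ := by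
  have hpartial (N : ℕ) : ‖∑ n ∈ Finset.range (N + 1), t n‖ = ‖t 0‖ := by
    rw [Finset.sum_range_succ', add_comm]
    exact norm_add_eq_left_of_norm_le_mul hr <|
      norm_sum_le_of_forall_le_of_nonneg (by positivity) fun n _ ↦ ht (n + 1) (by omega)
  refine tendsto_nhds_unique ((tendsto_add_atTop_iff_nat 1).2 hs).norm ?_
  simp only [hpartial, tendsto_const_nhds]

lemma IsUltrametricDist.injOn_ball_of_map_sub {G : Type*} [AddGroup G] {φ : E → G} {r : ℝ}
    (hsub : ∀ x y, φ (x - y) = φ x - φ y) (hker : ∀ z, ‖z‖ < r → φ z = 0 → z = 0) :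
    Set.InjOn φ {z | ‖z‖ < r} := fun x hx y hy hxy ↦ by
  refine sub_eq_zero.mp (hker _ ?_ (by rw [hsub, hxy, sub_self]))
  rw [sub_eq_add_neg]
  exact (norm_add_le_max x (-y)).trans_lt (max_lt hx (by rwa [norm_neg]))

end Ultrametric

namespace PowerSeries

variable {K : Type*}

lemma norm_coeff_mul_le [NormedRing K] [IsUltrametricDist K] {f g : K⟦X⟧} {a b : ℝ}
    (hf : ∀ m, ‖coeff m f‖ ≤ a) (hg : ∀ m, ‖coeff m g‖ ≤ b) (m : ℕ) :
    ‖coeff m (f * g)‖ ≤ a * b := by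
  have ha : 0 ≤ a := (norm_nonneg _).trans (hf 0)
  have hb : 0 ≤ b := (norm_nonneg _).trans (hg 0)
  rw [coeff_mul]
  exact IsUltrametricDist.norm_sum_le_of_forall_le_of_nonneg (mul_nonneg ha hb) fun _ _ ↦
    (norm_mul_le _ _).trans (mul_le_mul (hf _) (hg _) (norm_nonneg _) ha)

lemma norm_coeff_inv_le [NormedField K] [IsUltrametricDist K] {f : K⟦X⟧}
    (hf : ∀ m, ‖coeff m f‖ ≤ ‖constantCoeff f‖) (m : ℕ) :
    ‖coeff m f⁻¹‖ ≤ ‖constantCoeff f‖⁻¹ := by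
  induction m using Nat.strong_induction_on with
  | _ m ih =>
    rw [coeff_inv]
    split_ifs
    · rw [norm_inv]
    · rw [norm_mul, norm_neg, norm_inv]
      refine mul_le_of_le_one_right (by positivity) ?_
      refine IsUltrametricDist.norm_sum_le_of_forall_le_of_nonneg zero_le_one fun p _ ↦ ?_
      split_ifs with hp
      · exact (norm_mul_le _ _).trans <| (mul_le_mul (hf _) (ih _ hp) (norm_nonneg _)
          (norm_nonneg _)).trans mul_inv_le_one
      · simp

lemma norm_coeff_one_sub_C_mul_X_le [NormedRing K] [NormOneClass K] {a : K} (ha : ‖a‖ ≤ 1)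
    (m : ℕ) : ‖coeff m (1 - C a * X)‖ ≤ 1 := by
  rcases m with _ | _ | m <;> simp [coeff_one, ha]

lemma norm_coeff_prod_inv_one_sub_C_mul_X_le [NormedField K] [IsUltrametricDist K] {ι : Type*}
    (s : Finset ι) {a : ι → K} (ha : ∀ i, ‖a i‖ ≤ 1) (m : ℕ) :
    ‖coeff m (∏ i ∈ s, (1 - C (a i) * X)⁻¹)‖ ≤ 1 := by
  revert m
  refine Finset.prod_induction _ (fun f ↦ ∀ m, ‖coeff m f‖ ≤ 1)
    (fun f g hf hg m ↦ by simpa using norm_coeff_mul_le hf hg m)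
    (fun m ↦ by rcases m with _ | m <;> simp [coeff_one]) fun i _ m ↦ ?_
  refine (norm_coeff_inv_le (f := 1 - C (a i) * X) ?_ m).trans_eq (by simp)
  simpa using norm_coeff_one_sub_C_mul_X_le (ha i)

lemma constantCoeff_eq_of_tendsto_C_mul_prod [NormedField K] {lam : K} {a : ℕ → K} {ω : K⟦X⟧}
    (hω : ∀ m, Tendsto (fun N ↦ coeff m (C lam * ∏ i ∈ Finset.range N, (1 - C (a i) * X)⁻¹))
      atTop (𝓝 (coeff m ω))) :
    constantCoeff ω = lam := by
  rw [← coeff_zero_eq_constantCoeff_apply]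
  refine tendsto_nhds_unique (hω 0) ?_
  simp [coeff_zero_eq_constantCoeff_apply, map_prod]

lemma norm_coeff_le_of_tendsto_C_mul_prod [NormedField K] [IsUltrametricDist K] {lam : K}
    {a : ℕ → K} {ω : K⟦X⟧} (ha : ∀ i, ‖a i‖ ≤ 1)
    (hω : ∀ m, Tendsto (fun N ↦ coeff m (C lam * ∏ i ∈ Finset.range N, (1 - C (a i) * X)⁻¹))
      atTop (𝓝 (coeff m ω))) (m : ℕ) :
    ‖coeff m ω‖ ≤ ‖lam‖ := by
  refine le_of_tendsto' (hω m).norm fun N ↦ ?_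
  rw [coeff_C_mul, norm_mul]
  exact mul_le_of_le_one_right (norm_nonneg _) (norm_coeff_prod_inv_one_sub_C_mul_X_le _ ha m)

lemma coeff_inv_C_sub_X [Field K] {b : K} (hb : b ≠ 0) (m : ℕ) :
    coeff m (C b - X)⁻¹ = b⁻¹ ^ (m + 1) := by
  have h : (C b - X)⁻¹ = invUnitsSub (Units.mk0 b hb) :=
    (inv_eq_iff_mul_eq_one (by simpa using hb)).2 (invUnitsSub_mul_sub _)
  simp [h, coeff_invUnitsSub]

end PowerSeries

lemma gaussNorm_eq_norm_constantCoeff {K : Type*} [NormedField K] {f : K⟦X⟧}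
    (hf : ∀ m, ‖coeff m f‖ ≤ ‖constantCoeff f‖) : gaussNorm K f = ‖constantCoeff f‖ :=
  le_antisymm (ciSup_le hf) <| by
    rw [← coeff_zero_eq_constantCoeff_apply]
    exact le_ciSup (f := fun m ↦ ‖coeff m f‖) ⟨_, Set.forall_mem_range.2 hf⟩ 0

lemma gaussNorm_inv_mul_eq {K : Type*} [NormedField K] [IsUltrametricDist K] {f g : K⟦X⟧}
    (hf : ∀ m, ‖coeff m f‖ ≤ ‖constantCoeff f‖) (hg : ∀ m, ‖coeff m g‖ ≤ ‖constantCoeff g‖) :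
    gaussNorm K (f⁻¹ * g) = ‖constantCoeff g‖ / ‖constantCoeff f‖ := by
  have hconst : ‖constantCoeff (f⁻¹ * g)‖ = ‖constantCoeff g‖ / ‖constantCoeff f‖ := by
    rw [map_mul, constantCoeff_inv, norm_mul, norm_inv, inv_mul_eq_div]
  rw [← hconst, gaussNorm_eq_norm_constantCoeff]
  intro m
  rw [hconst, div_eq_inv_mul]
  exact norm_coeff_mul_le (norm_coeff_inv_le hf) hg m

lemma Real.rpow_div_sub_one_pow {Q : ℝ} (hQ : 0 ≤ Q) {q : ℕ} (hq : 1 < q) :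
    (Q ^ ((q : ℝ) / ((q : ℝ) - 1))) ^ (q - 1) = Q ^ q := by
  have hq' : (1 : ℝ) < q := by exact_mod_cast hq
  rw [← Real.rpow_natCast _ (q - 1), ← Real.rpow_mul hQ, Nat.cast_sub hq.le, Nat.cast_one,
    div_mul_cancel₀ _ (by linarith), Real.rpow_natCast]

lemma Nat.mul_pow_sub_one_le {q n : ℕ} (hq : 1 < q) (hn : 1 ≤ n) :
    q * (q ^ n - 1) ≤ n * q ^ n * (q - 1) := by
  obtain rfl | hn := hn.eq_or_lt
  · simp [mul_comm]
  · have h2 : q * q ^ n ≤ 2 * q ^ n * (q - 1) := by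
      obtain ⟨r, rfl⟩ : ∃ r, q = r + 2 := ⟨q - 2, by omega⟩
      simp only [show r + 2 - 1 = r + 1 by omega]
      nlinarith [pow_pos (by omega : 0 < r + 2) n]
    calc q * (q ^ n - 1) ≤ q * q ^ n := Nat.mul_le_mul_left _ (Nat.sub_le _ _)
      _ ≤ 2 * q ^ n * (q - 1) := h2
      _ ≤ n * q ^ n * (q - 1) := by gcongr; omega

lemma pow_pow_sub_one_le {P Q : ℝ} {q n : ℕ} (hq : 1 < q) (hn : 1 ≤ n) (hP : 0 ≤ P)
    (hQ : 1 ≤ Q) (hPQ : P ^ (q - 1) = Q ^ q) : P ^ (q ^ n - 1) ≤ Q ^ (n * q ^ n) := by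
  rw [← pow_le_pow_iff_left₀ (pow_nonneg hP _) (by positivity) (by omega : q - 1 ≠ 0),
    ← pow_mul, ← pow_mul, mul_comm (q ^ n - 1), pow_mul, hPQ, ← pow_mul]
  exact pow_le_pow_right₀ hQ (Nat.mul_pow_sub_one_le hq hn)

section Carlitz

variable {K : Type*} [NormedField K] {θ π : K} {q : ℕ}

variable (θ π q) in
def ftCoeffSummand (z : K) (m n : ℕ) : K :=
  (π * z) ^ q ^ n * (carlitzD K θ q n)⁻¹ * ((θ ^ q ^ n)⁻¹) ^ (m + 1)

lemma coeff_ftPartial (hθ : θ ≠ 0) (z : K) (N m : ℕ) :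
    PowerSeries.coeff m (ftPartial K θ π q z N) =
      ∑ n ∈ Finset.range N, ftCoeffSummand θ π q z m n := by
  simp only [ftPartial, map_sum, PowerSeries.coeff_C_mul,
    PowerSeries.coeff_inv_C_sub_X (pow_ne_zero _ hθ), ftCoeffSummand, mul_assoc]

lemma ftPartial_sub {p k : ℕ} [ExpChar K p]
    (hq : q = p ^ k) (x y : K) (N : ℕ) :
    ftPartial K θ π q (x - y) N = ftPartial K θ π q x N - ftPartial K θ π q y N := by
  subst hq
  simp only [ftPartial, ← Finset.sum_sub_distrib, ← sub_mul, ← map_sub, mul_sub, ← pow_mul,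
    sub_pow_expChar_pow]

lemma eq_sub_of_tendsto_ftPartial {p k : ℕ} [ExpChar K p] (hq : q = p ^ k) {F : K → K⟦X⟧}
    (hF : ∀ z m, Tendsto (fun N ↦ PowerSeries.coeff m (ftPartial K θ π q z N)) atTop
      (𝓝 (PowerSeries.coeff m (F z)))) (x y : K) :
    F (x - y) = F x - F y := by
  ext m
  refine tendsto_nhds_unique (hF (x - y) m) ?_
  simpa only [ftPartial_sub hq, map_sub] using (hF x m).sub (hF y m)

variable [IsUltrametricDist K]

lemma norm_carlitzD (hq : 1 < q) (hθ : 1 < ‖θ‖) (n : ℕ) :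
    ‖carlitzD K θ q n‖ = ‖θ‖ ^ (n * q ^ n) := by
  have hterm : ∀ j ∈ Finset.range n, ‖θ ^ q ^ n - θ ^ q ^ j‖ = ‖θ‖ ^ q ^ n := fun j hj ↦ by
    have hlt : ‖θ ^ q ^ j‖ < ‖θ ^ q ^ n‖ := by
      simpa only [norm_pow] using
        pow_lt_pow_right₀ hθ (Nat.pow_lt_pow_right hq (Finset.mem_range.mp hj))
    rw [sub_eq_add_neg, IsUltrametricDist.norm_add_eq_max_of_norm_ne_norm
      (by rw [norm_neg]; exact hlt.ne'), norm_neg, max_eq_left hlt.le, norm_pow]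
  rw [carlitzD, norm_prod, Finset.prod_congr rfl hterm, Finset.prod_const, Finset.card_range,
    ← pow_mul, mul_comm]

lemma norm_ftCoeffSummand (hq : 1 < q) (hθ : ‖θ‖ = q) (z : K) (m n : ℕ) :
    ‖ftCoeffSummand θ π q z m n‖ = (‖π‖ * ‖z‖ / q ^ (m + 1)) ^ q ^ n / q ^ (n * q ^ n) := by
  have hθ1 : 1 < ‖θ‖ := hθ ▸ (by exact_mod_cast hq)
  simp only [ftCoeffSummand, norm_mul, norm_pow, norm_inv, norm_carlitzD hq hθ1, hθ]
  rw [div_pow, ← pow_mul, inv_pow, ← pow_mul, mul_comm (q ^ n)]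
  ring

lemma norm_ftCoeffSummand_le (hq : 1 < q) (hθ : ‖θ‖ = q) (hπ : ‖π‖ ^ (q - 1) = (q : ℝ) ^ q)
    {z : K} (hz : ‖z‖ < q) (m : ℕ) {n : ℕ} (hn : 1 ≤ n) :
    ‖ftCoeffSummand θ π q z m n‖ ≤ ‖z‖ / q * ‖ftCoeffSummand θ π q z m 0‖ := by
  have hQ : (1 : ℝ) < q := by exact_mod_cast hq
  have hqn : 2 ≤ q ^ n := (Nat.le_self_pow (by omega) q).trans' hq
  rw [norm_ftCoeffSummand hq hθ, norm_ftCoeffSummand hq hθ]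
  simp only [pow_zero, zero_mul, pow_one, div_one]
  set c := ‖π‖ * ‖z‖ / q ^ (m + 1)
  have hcπ : c ≤ ‖π‖ := by
    rw [div_le_iff₀ (by positivity)]
    exact mul_le_mul_of_nonneg_left (hz.le.trans (le_self_pow₀ hQ.le (by omega))) (norm_nonneg _)
  have hcz : c ≤ ‖π‖ * ‖z‖ / q :=
    div_le_div_of_nonneg_left (by positivity) (by positivity) (le_self_pow₀ hQ.le (by omega))
  calc c ^ q ^ n / q ^ (n * q ^ n)
      = c * (c ^ (q ^ n - 2) * c) / q ^ (n * q ^ n) := by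
        rw [← pow_succ, ← pow_succ']
        congr 2
        omega
    _ ≤ c * (‖π‖ ^ (q ^ n - 2) * (‖π‖ * ‖z‖ / q)) / q ^ (n * q ^ n) := by gcongr
    _ = c * (‖π‖ ^ (q ^ n - 1) * (‖z‖ / q)) / q ^ (n * q ^ n) := by
        rw [show q ^ n - 1 = q ^ n - 2 + 1 by omega, pow_succ]
        ring
    _ ≤ c * (q ^ (n * q ^ n) * (‖z‖ / q)) / q ^ (n * q ^ n) := by
        gcongr
        exact pow_pow_sub_one_le hq hn (norm_nonneg π) hQ.le hπ
    _ = ‖z‖ / q * c := by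
        field_simp

lemma norm_coeff_eq_of_tendsto_ftPartial (hq : 1 < q) (hθ : ‖θ‖ = q)
    (hπ : ‖π‖ ^ (q - 1) = (q : ℝ) ^ q) {z : K} (hz : ‖z‖ < q) {F : K⟦X⟧}
    (hF : ∀ m, Tendsto (fun N ↦ PowerSeries.coeff m (ftPartial K θ π q z N)) atTop
      (𝓝 (PowerSeries.coeff m F))) (m : ℕ) :
    ‖PowerSeries.coeff m F‖ = ‖π‖ * ‖z‖ / q ^ (m + 1) := by
  have hθ0 : θ ≠ 0 := norm_ne_zero_iff.mp (by rw [hθ]; positivity)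
  have hQ : (0 : ℝ) < q := by positivity
  rw [IsUltrametricDist.norm_eq_of_tendsto_sum_range (t := ftCoeffSummand θ π q z m)
    (by positivity) ((div_lt_one hQ).2 hz)
    (fun n hn ↦ norm_ftCoeffSummand_le hq hθ hπ hz m hn)
    (by simpa only [coeff_ftPartial hθ0] using hF m), norm_ftCoeffSummand hq hθ]
  simp

lemma gaussNorm_inv_mul_eq_of_tendsto (hq : 1 < q) (hθ : ‖θ‖ = q)
    (hπ : ‖π‖ ^ (q - 1) = (q : ℝ) ^ q) {lam : K} (hπlam : ‖π‖ = q * ‖lam‖) {ω : K⟦X⟧}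
    (hω : ∀ m, Tendsto (fun N ↦ PowerSeries.coeff m (PowerSeries.C lam *
      ∏ i ∈ Finset.range N, (1 - PowerSeries.C ((θ ^ q ^ i)⁻¹) * PowerSeries.X)⁻¹)) atTop
      (𝓝 (PowerSeries.coeff m ω)))
    {z : K} (hz : ‖z‖ < q) {F : K⟦X⟧}
    (hF : ∀ m, Tendsto (fun N ↦ PowerSeries.coeff m (ftPartial K θ π q z N)) atTop
      (𝓝 (PowerSeries.coeff m F))) :
    gaussNorm K (ω⁻¹ * F) = ‖z‖ := by
  have hQ : (1 : ℝ) < q := by exact_mod_cast hq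
  have hlam0 : ‖lam‖ ≠ 0 := fun h ↦ by
    rw [hπlam, h, mul_zero, zero_pow (by omega)] at hπ
    exact (pow_pos (by positivity : (0 : ℝ) < q) q).ne hπ
  have hω₀ : PowerSeries.constantCoeff ω = lam :=
    PowerSeries.constantCoeff_eq_of_tendsto_C_mul_prod hω
  have hω_le (m : ℕ) : ‖PowerSeries.coeff m ω‖ ≤ ‖PowerSeries.constantCoeff ω‖ := by
    refine hω₀ ▸ PowerSeries.norm_coeff_le_of_tendsto_C_mul_prod (fun i ↦ ?_) hω m
    rw [norm_inv, norm_pow, hθ]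
    exact inv_le_one_of_one_le₀ (one_le_pow₀ hQ.le)
  have hF_norm := norm_coeff_eq_of_tendsto_ftPartial hq hθ hπ hz hF
  have hF_le (m : ℕ) : ‖PowerSeries.coeff m F‖ ≤ ‖PowerSeries.constantCoeff F‖ := by
    rw [← PowerSeries.coeff_zero_eq_constantCoeff_apply, hF_norm, hF_norm]
    gcongr
    · exact hQ.le
    · omega
  rw [gaussNorm_inv_mul_eq hω_le hF_le, ← PowerSeries.coeff_zero_eq_constantCoeff_apply, hF_norm,
    hω₀, hπlam, zero_add, pow_one]
  field_simp

end Carlitz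

theorem statement14_general
    (Fq : Type*) [Field Fq] [Fintype Fq]
    (Cinf : Type*) [NormedField Cinf]
    [IsUltrametricDist Cinf] [Algebra Fq Cinf] (θ : Cinf)
    (q : ℕ) (hq : q = Fintype.card Fq) (hθ : ‖θ‖ = (q : ℝ))
    (π : Cinf) (hπ : ‖π‖ = (q : ℝ) ^ ((q : ℝ) / ((q : ℝ) - 1)))
    (lam : Cinf) (hlam : lam ^ (q - 1) = -θ)
    (ω : PowerSeries Cinf)
    (hω : ∀ m : ℕ,
      Tendsto
        (fun N : ℕ => PowerSeries.coeff m
          (PowerSeries.C lam *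
            ∏ i ∈ Finset.range N,
              (1 - PowerSeries.C ((θ ^ q ^ i)⁻¹) * PowerSeries.X)⁻¹))
        atTop (nhds (PowerSeries.coeff m ω)))
    (ft : Cinf → PowerSeries Cinf)
    (hft : ∀ (z : Cinf) (m : ℕ),
      Tendsto (fun N : ℕ => PowerSeries.coeff m (ftPartial Cinf θ π q z N))
        atTop (nhds (PowerSeries.coeff m (ft z))))
    (chi : Cinf → PowerSeries Cinf)
    (hchi : ∀ z : Cinf, chi z = ω⁻¹ * ft z) :
    (∀ z : Cinf, ‖z‖ < (q : ℝ) → gaussNorm Cinf (chi z) = ‖z‖) ∧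
    Set.MapsTo chi {z : Cinf | ‖z‖ < (q : ℝ)}
      {f : PowerSeries Cinf | gaussNorm Cinf f < (q : ℝ)} ∧
    Set.InjOn chi {z : Cinf | ‖z‖ < (q : ℝ)} := by
  have hq1 : 1 < q := hq ▸ Fintype.one_lt_card
  have hπq : ‖π‖ ^ (q - 1) = (q : ℝ) ^ q := hπ ▸ Real.rpow_div_sub_one_pow (by positivity) hq1
  have hlamq : ‖lam‖ ^ (q - 1) = q := by rw [← norm_pow, hlam, norm_neg, hθ]
  have hπlam : ‖π‖ = q * ‖lam‖ :=
    (pow_left_inj₀ (norm_nonneg π) (by positivity) (by omega : q - 1 ≠ 0)).mp <| by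
      rw [hπq, mul_pow, hlamq, ← pow_succ, Nat.sub_add_cancel hq1.le]
  have hnorm (z : Cinf) (hz : ‖z‖ < q) : gaussNorm Cinf (chi z) = ‖z‖ :=
    hchi z ▸ gaussNorm_inv_mul_eq_of_tendsto hq1 hθ hπq hπlam hω hz (hft z)
  obtain ⟨p, _, k, hp, hcard⟩ := FiniteField.card' Fq
  have : Fact p.Prime := ⟨hp⟩
  have : CharP Cinf p := charP_of_injective_algebraMap (algebraMap Fq Cinf).injective p
  have hsub (x y : Cinf) : chi (x - y) = chi x - chi y := by
    rw [hchi, hchi, hchi, eq_sub_of_tendsto_ftPartial (hq.trans hcard) hft, mul_sub]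
  refine ⟨hnorm, fun z hz ↦ (hnorm z hz).trans_lt hz,
    IsUltrametricDist.injOn_ball_of_map_sub hsub fun z hz hz0 ↦ norm_eq_zero.mp ?_⟩
  rw [← hnorm z hz, hz0]
  simp [_root_.gaussNorm]

/-- for `|z| < q` one has `‖χ_t(z)‖ = |z|` (Gauss norm);  in particular
`χ_t` restricts to an injective `𝔽_q`-linear map from `{z : |z| < q}` into
`{f ∈ 𝕋 : ‖f‖ < q}`. -/
theorem statement14
    (Fq : Type*) [Field Fq] [Fintype Fq]
    (Cinf : Type*) [NormedField Cinf] [CompleteSpace Cinf] [IsAlgClosed Cinf]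
    [IsUltrametricDist Cinf] [Algebra Fq Cinf] (θ : Cinf)
    (q : ℕ) (hq : q = Fintype.card Fq) (hθ : ‖θ‖ = (q : ℝ))
    (π : Cinf) (hπ : ‖π‖ = (q : ℝ) ^ ((q : ℝ) / ((q : ℝ) - 1)))
    (hker : ∀ z : Cinf, expC Cinf θ q z = 0 ↔ ∃ a : Polynomial Fq, z = π * aeval θ a)
    (lam : Cinf) (hlam : lam ^ (q - 1) = -θ)
    (ω : PowerSeries Cinf)
    (hω : ∀ m : ℕ,
      Tendsto
        (fun N : ℕ => PowerSeries.coeff m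
          (PowerSeries.C lam *
            ∏ i ∈ Finset.range N,
              (1 - PowerSeries.C ((θ ^ q ^ i)⁻¹) * PowerSeries.X)⁻¹))
        atTop (nhds (PowerSeries.coeff m ω)))
    (ft : Cinf → PowerSeries Cinf)
    (hft : ∀ (z : Cinf) (m : ℕ),
      Tendsto (fun N : ℕ => PowerSeries.coeff m (ftPartial Cinf θ π q z N))
        atTop (nhds (PowerSeries.coeff m (ft z))))
    (chi : Cinf → PowerSeries Cinf)
    (hchi : ∀ z : Cinf, chi z = ω⁻¹ * ft z) :
    (∀ z : Cinf, ‖z‖ < (q : ℝ) → gaussNorm Cinf (chi z) = ‖z‖) ∧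
    Set.MapsTo chi {z : Cinf | ‖z‖ < (q : ℝ)}
      {f : PowerSeries Cinf | gaussNorm Cinf f < (q : ℝ)} ∧
    Set.InjOn chi {z : Cinf | ‖z‖ < (q : ℝ)} :=
  statement14_general Fq Cinf θ q hq hθ π hπ lam hlam ω hω ft hft chi hchi
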